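/- In the 4-player egalitarian construction, in every envy-free complete connected division the rightmost piece must be given to player 1. -/

import Mathlib

open MeasureTheory Set
open scoped ENNReal

/-- A connected division of the cake `[0,1]` among `n` players: each player gets an
open interval, the intervals are pairwise disjoint and contained in `[0,1]`. -/
structure ConnDiv (n : ℕ) where
  pieces : Fin n → Set ℝ
  isInterval : ∀ i, ∃ a b : ℝ, pieces i = Set.Ioo a b
  subset : ∀ i, pieces i ⊆ Set.Icc (0:ℝ) 1
  disj : Pairwise fun i j => Disjoint (pieces i) (pieces j)

/-- A connected division is complete if the closures of the pieces cover `[0,1]`. -/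
def ConnDiv.Complete {n : ℕ} (d : ConnDiv n) : Prop :=
  Set.Icc (0:ℝ) 1 ⊆ ⋃ i, closure (d.pieces i)

/-- Envy-freeness: every player weakly prefers her own piece. -/
def EnvyFree {n : ℕ} (v : Fin n → Measure ℝ) (d : ConnDiv n) : Prop :=
  ∀ i j, v i (d.pieces j) ≤ v i (d.pieces i)

/-- Utilitarian welfare: sum of own-piece values. -/
noncomputable def util {n : ℕ} (v : Fin n → Measure ℝ) (d : ConnDiv n) : ℝ≥0∞ :=
  ∑ i, v i (d.pieces i)

/-- Egalitarian welfare: minimum own-piece value. -/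
noncomputable def egal {n : ℕ} (v : Fin n → Measure ℝ) (d : ConnDiv n) : ℝ≥0∞ :=
  ⨅ i, v i (d.pieces i)

/-- The uniform measure of total mass `m` on the interval `(a,b)`. -/
noncomputable def unifOn (a b m : ℝ) : Measure ℝ :=
  ENNReal.ofReal (m / (b - a)) • volume.restrict (Set.Ioo a b)

/-- Player 1's measure: `1/2 - ε` on `(0,ε)`, `3ε` on `(3/4, 3/4+3ε)`,
`1/2 - 2ε` on `(1-ε,1)`, uniform within each interval. -/
noncomputable def q1 (ε : ℝ) : Measure ℝ :=
  unifOn 0 ε (1/2 - ε) + unifOn (3/4) (3/4 + 3*ε) (3*ε) + unifOn (1-ε) 1 (1/2 - 2*ε)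

/-- Player 2's measure: `3ε` on `(ε,2ε)`, `1/2 - 2ε` on `(1/4-ε, 1/4)`,
`1/2 - ε` on `(1/2, 1/2+ε)`, uniform within each interval. -/
noncomputable def q2 (ε : ℝ) : Measure ℝ :=
  unifOn ε (2*ε) (3*ε) + unifOn (1/4 - ε) (1/4) (1/2 - 2*ε) +
    unifOn (1/2) (1/2 + ε) (1/2 - ε)

/-- The uniform (Lebesgue) measure on `[0,1]` (players 3 and 4). -/
noncomputable def qU : Measure ℝ := volume.restrict (Set.Icc (0:ℝ) 1)

noncomputable def vEg4' (ε : ℝ) : Fin 4 → Measure ℝ := ![q1 ε, q2 ε, qU, qU]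

/-!
If the rightmost piece `(c, 1)` belonged to one of players 2, 3, 4, envy-freeness would make it
worth at least a quarter of her total value. Player 2 has no value right of `3/4`, and players
3 and 4 value length, so in every case `c ≤ 3/4`. But then the piece contains both of
player 1's right-hand blocks and is worth `1/2 + ε` to her, more than half of her total, so she
would envy its owner.
-/

namespace ConnDiv

variable {n : ℕ} (d : ConnDiv n)

lemma measurableSet_pieces (i : Fin n) : MeasurableSet (d.pieces i) := by
  obtain ⟨a, b, h⟩ := d.isInterval i
  exact h ▸ measurableSet_Ioo

lemma volume_Icc_diff_iUnion_pieces (hc : d.Complete) :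
    volume (Icc (0 : ℝ) 1 \ ⋃ i, d.pieces i) = 0 := by
  have hsub : Icc (0 : ℝ) 1 \ ⋃ i, d.pieces i ⊆ ⋃ i, frontier (d.pieces i) := by
    intro x ⟨hx, hxU⟩
    obtain ⟨i, hi⟩ := mem_iUnion.1 (hc hx)
    exact mem_iUnion.2 ⟨i, by
      rw [← closure_sdiff_interior]
      exact ⟨hi, fun h => hxU (mem_iUnion.2 ⟨i, interior_subset h⟩)⟩⟩
  refine measure_mono_null hsub (measure_iUnion_null fun i => ?_)
  obtain ⟨a, b, h⟩ := d.isInterval i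
  exact Convex.addHaar_frontier volume (h ▸ convex_Ioo a b)

lemma exists_pieces_eq_Ioo_one (hc : d.Complete) :
    ∃ j c, c < 1 ∧ d.pieces j = Ioo c 1 := by
  obtain ⟨j, hj⟩ := mem_iUnion.1 (hc (right_mem_Icc.2 zero_le_one))
  obtain ⟨c, b, hcb⟩ := d.isInterval j
  rw [hcb] at hj
  have hlt : c < b := by
    by_contra h
    simp [Ioo_eq_empty h] at hj
  have hclosure : Icc c b ⊆ Icc 0 1 := by
    rw [← closure_Ioo hlt.ne]
    exact closure_minimal (hcb ▸ d.subset j) isClosed_Icc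
  rw [closure_Ioo hlt.ne] at hj
  have hb : b = 1 := le_antisymm ((Icc_subset_Icc_iff hlt.le).1 hclosure).2 hj.2
  exact ⟨j, c, hb ▸ hlt, hb ▸ hcb⟩

end ConnDiv

namespace EnvyFree

variable {n : ℕ} {v : Fin n → Measure ℝ} {d : ConnDiv n}

lemma measure_Icc_le_mul (hEF : EnvyFree v d) (hc : d.Complete) {i : Fin n}
    (hac : v i ≪ volume) : v i (Icc 0 1) ≤ n * v i (d.pieces i) := by
  have hae : Icc (0 : ℝ) 1 ≤ᵐ[v i] ⋃ j, d.pieces j :=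
    ae_le_set.2 (hac (d.volume_Icc_diff_iUnion_pieces hc))
  calc v i (Icc 0 1) ≤ v i (⋃ j, d.pieces j) := measure_mono_ae hae
    _ ≤ ∑ j, v i (d.pieces j) := measure_iUnion_fintype_le _ _
    _ ≤ ∑ _j : Fin n, v i (d.pieces i) := Finset.sum_le_sum fun j _ => hEF i j
    _ = n * v i (d.pieces i) := by simp

lemma eq_of_measure_univ_lt (hEF : EnvyFree v d) {i j : Fin n}
    (h : v i univ < 2 * v i (d.pieces j)) : j = i := by
  by_contra hji
  have hunion : v i (d.pieces i ∪ d.pieces j) = v i (d.pieces i) + v i (d.pieces j) :=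
    measure_union (d.disj (Ne.symm hji)) (d.measurableSet_pieces j)
  refine (measure_mono (μ := v i) (subset_univ (d.pieces i ∪ d.pieces j))).not_gt ?_
  calc v i (d.pieces i ∪ d.pieces j) ≥ 2 * v i (d.pieces j) := by
        rw [hunion, two_mul]; exact add_le_add (hEF i j) le_rfl
    _ > v i univ := h

end EnvyFree

section UniformBlocks

variable {a b m : ℝ} {s : Set ℝ}

lemma unifOn_apply (a b m : ℝ) (s : Set ℝ) :
    unifOn a b m s = ENNReal.ofReal (m / (b - a)) * volume (s ∩ Ioo a b) := by
  simp [unifOn, Measure.restrict_apply' measurableSet_Ioo]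

lemma unifOn_absolutelyContinuous (a b m : ℝ) : unifOn a b m ≪ volume :=
  (Measure.absolutelyContinuous_of_le Measure.restrict_le_self).smul_left _

lemma unifOn_of_subset (hab : a < b) (hm : 0 ≤ m) (hs : Ioo a b ⊆ s) :
    unifOn a b m s = ENNReal.ofReal m := by
  rw [unifOn_apply, inter_eq_right.2 hs, Real.volume_Ioo,
    ← ENNReal.ofReal_mul (div_nonneg hm (sub_nonneg.2 hab.le)),
    div_mul_cancel₀ _ (sub_ne_zero.2 hab.ne')]

lemma unifOn_of_disjoint (hs : Disjoint s (Ioo a b)) : unifOn a b m s = 0 := by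
  simp [unifOn_apply, hs.inter_eq]

end UniformBlocks

section Valuations

variable {ε : ℝ}

lemma vEg4'_absolutelyContinuous (ε : ℝ) (i : Fin 4) : vEg4' ε i ≪ volume := by
  have h := unifOn_absolutelyContinuous
  fin_cases i
  · exact ((h _ _ _).add_left (h _ _ _)).add_left (h _ _ _)
  · exact ((h _ _ _).add_left (h _ _ _)).add_left (h _ _ _)
  all_goals exact Measure.absolutelyContinuous_of_le Measure.restrict_le_self

lemma q1_univ (hε : 0 < ε) (hε' : ε ≤ 1/4) : q1 ε univ = 1 := by
  have hfull : ∀ {a b m : ℝ}, a < b → 0 ≤ m → unifOn a b m univ = ENNReal.ofReal m :=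
    fun hab hm => unifOn_of_subset hab hm (subset_univ _)
  simp only [q1, Measure.coe_add, Pi.add_apply, hfull hε (by linarith : (0:ℝ) ≤ 1/2 - ε),
    hfull (by linarith : (3:ℝ)/4 < 3/4 + 3*ε) (by linarith : (0:ℝ) ≤ 3*ε),
    hfull (by linarith : 1 - ε < 1) (by linarith : (0:ℝ) ≤ 1/2 - 2*ε)]
  rw [← ENNReal.ofReal_add (by linarith) (by linarith),
    ← ENNReal.ofReal_add (by linarith) (by linarith), ← ENNReal.ofReal_one]
  ring_nf

lemma ofReal_le_q1_Ioo (hε : 0 < ε) (hε' : ε ≤ 1/12) {c : ℝ} (hc : c ≤ 3/4) :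
    ENNReal.ofReal (1/2 + ε) ≤ q1 ε (Ioo c 1) := by
  have hmid : unifOn (3/4) (3/4 + 3*ε) (3*ε) (Ioo c 1) = ENNReal.ofReal (3*ε) :=
    unifOn_of_subset (by linarith) (by linarith) (Ioo_subset_Ioo hc (by linarith))
  have hright : unifOn (1 - ε) 1 (1/2 - 2*ε) (Ioo c 1) = ENNReal.ofReal (1/2 - 2*ε) :=
    unifOn_of_subset (by linarith) (by linarith) (Ioo_subset_Ioo (by linarith) le_rfl)
  calc ENNReal.ofReal (1/2 + ε) = ENNReal.ofReal (3*ε) + ENNReal.ofReal (1/2 - 2*ε) := by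
        rw [← ENNReal.ofReal_add (by linarith) (by linarith)]; ring_nf
    _ ≤ q1 ε (Ioo c 1) := by
        simp only [q1, Measure.coe_add, Pi.add_apply, hmid, hright, add_assoc]
        exact le_add_self

lemma q2_Ioo_eq_zero (hε' : ε ≤ 1/4) {c : ℝ} (hc : 3/4 ≤ c) : q2 ε (Ioo c 1) = 0 := by
  have hdisj : ∀ {a b m : ℝ}, b ≤ 3/4 → unifOn a b m (Ioo c 1) = 0 := fun hb =>
    unifOn_of_disjoint ((Ioi_disjoint_Iio_of_le (hb.trans hc)).mono
      Ioo_subset_Ioi_self Ioo_subset_Iio_self)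
  simp only [q2, Measure.coe_add, Pi.add_apply, hdisj (by linarith : 2*ε ≤ 3/4),
    hdisj (by norm_num : (1:ℝ)/4 ≤ 3/4), hdisj (by linarith : 1/2 + ε ≤ 3/4), add_zero]

lemma q2_Icc_ne_zero (hε : 0 < ε) (hε' : ε < 1/2) : q2 ε (Icc 0 1) ≠ 0 := by
  have hright : unifOn (1/2) (1/2 + ε) (1/2 - ε) (Icc 0 1) = ENNReal.ofReal (1/2 - ε) :=
    unifOn_of_subset (by linarith) (by linarith)
      (Ioo_subset_Icc_self.trans (Icc_subset_Icc (by linarith) (by linarith)))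
  refine (ENNReal.ofReal_pos.2 (by linarith : (0:ℝ) < 1/2 - ε)).trans_le ?_ |>.ne'
  simp only [q2, Measure.coe_add, Pi.add_apply, hright]
  exact le_add_self

lemma qU_Icc : qU (Icc 0 1) = 1 := by
  simp [qU]

lemma qU_Ioo_le (c : ℝ) : qU (Ioo c 1) ≤ ENNReal.ofReal (1 - c) :=
  (Measure.restrict_le_self _).trans (Real.volume_Ioo).le

lemma le_three_quarters_of_pieces_eq_Ioo (hε : 0 < ε) (hε' : ε ≤ 1/4) {d : ConnDiv 4}
    (hc : d.Complete) (hEF : EnvyFree (vEg4' ε) d) {j : Fin 4} (hj0 : j ≠ 0) {c : ℝ}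
    (hj : d.pieces j = Ioo c 1) : c ≤ 3/4 := by
  have key := hEF.measure_Icc_le_mul hc (vEg4'_absolutelyContinuous ε j)
  rw [hj] at key
  have of_qU : qU (Icc 0 1) ≤ 4 * qU (Ioo c 1) → c ≤ 3/4 := fun h => by
    have h4 : ENNReal.ofReal 1 ≤ ENNReal.ofReal (4 * (1 - c)) := by
      rw [ENNReal.ofReal_mul (by norm_num), ENNReal.ofReal_one, ← qU_Icc]
      simpa using h.trans (by gcongr; exact qU_Ioo_le c)
    rcases ENNReal.ofReal_le_ofReal_iff'.1 h4 with h | h <;> linarith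
  fin_cases j
  · exact absurd rfl hj0
  · by_contra! h
    refine q2_Icc_ne_zero hε (by linarith) (le_antisymm ?_ zero_le)
    simpa [vEg4', q2_Ioo_eq_zero hε' h.le] using key
  · exact of_qU (by simpa [vEg4'] using key)
  · exact of_qU (by simpa [vEg4'] using key)

end Valuations

/-- In the 4-player egalitarian construction, in every envy-free complete
connected division the rightmost piece must be given to player 1. -/
theorem rightmost_piece_to_player1 (ε : ℝ) (hε : 0 < ε) (hε' : ε < 1/100)
    (d : ConnDiv 4) (hc : d.Complete) (hEF : EnvyFree (vEg4' ε) d) :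
    ∃ a : ℝ, a < 1 ∧ d.pieces 0 = Set.Ioo a 1 := by
  obtain ⟨j, c, hc1, hj⟩ := d.exists_pieces_eq_Ioo_one hc
  obtain rfl : j = 0 := by
    by_contra hj0
    have hc34 := le_three_quarters_of_pieces_eq_Ioo hε (by linarith) hc hEF hj0 hj
    refine hj0 (hEF.eq_of_measure_univ_lt ?_)
    calc vEg4' ε 0 univ = ENNReal.ofReal 1 := by simp [vEg4', q1_univ hε (by linarith)]
      _ < 2 * ENNReal.ofReal (1/2 + ε) := by
        rw [← ENNReal.ofReal_ofNat 2, ← ENNReal.ofReal_mul (by norm_num)]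
        exact (ENNReal.ofReal_lt_ofReal_iff (by linarith)).2 (by linarith)
      _ ≤ 2 * vEg4' ε 0 (d.pieces j) := by
        rw [hj]; gcongr; exact ofReal_le_q1_Ioo hε (by linarith) hc34
  exact ⟨c, hc1, hj⟩
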